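/- For any stable configuration r ∈ {0,1}^L of the DSS, let τ = min(L, L+1 − Σ_{x=1}^L r(x)). Then, starting from r and performing τ steps of the driven-dissipative dynamics, the distribution of the resulting stable configuration is exactly the product Bernoulli(p) measure ψ; that is, W^τ δ_r = ψ, where δ_r is the point mass at r. -/

import Mathlib

/-!
Under the leftmost-first rule, a pile of `t ≥ 1` particles on a site is resolved before anything
to its right moves. On an empty site, settling a particle and toppling it again amounts to
letting it jump, so all particles of the pile but one pass on and the last one settles with
probability `p`: the site ends up Bernoulli(`p`) and `t + z₀ - c₀` particles move to the next
site. Stabilizing a pile at the first site therefore follows a recursion on the chain length,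
`chainLaw`, and `W = chainLaw L 1`. This recursion is additive in the number of particles
(`chainLaw (m + k) = chainLaw m * chainLaw k`, the abelian property), so `W^τ = chainLaw L τ`.
With `τ = min(L, L + 1 - Σ r)` particles at least one particle reaches every site, so every site
is resampled and the outcome is `ψ`.
-/

namespace DSS

/-- A state of the DSS on `L` sites: a stable field `z : Fin L → Bool` together with a
finite multiset `w` of waiting particles (particles past site `L` have left the system). -/
structure State (L : ℕ) where
  z : Fin L → Bool
  w : Multiset (Fin L)

variable {L : ℕ}

/-- The multiset holding the right neighbour of `x`; empty if the particle leaves the system. -/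
def succSite (L : ℕ) (x : Fin L) : Multiset (Fin L) :=
  if h : x.val + 1 < L then {(⟨x.val + 1, h⟩ : Fin L)} else 0

/-- Evolution of a waiting particle at `x` when `z x = 1`: the waiting particle moves to
`x+1` and the stable particle at `x` becomes a waiting particle at `x`. -/
def topple (s : State L) (x : Fin L) : State L :=
  ⟨Function.update s.z x false, s.w + succSite L x⟩

/-- Evolution of a waiting particle at `x` when `z x = 0`, settling branch (probability p). -/
def settle (s : State L) (x : Fin L) : State L :=
  ⟨Function.update s.z x true, s.w.erase x⟩

/-- Evolution of a waiting particle at `x` when `z x = 0`, jumping branch (probability q). -/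
def jump (s : State L) (x : Fin L) : State L :=
  ⟨s.z, s.w.erase x + succSite L x⟩

/-- `stabilizeAux p q R n s c` is the probability that, evolving one waiting particle at a
time (the particle being selected by the rule `R`), the process started from `s` reaches
within `n` elementary steps a stable state whose stable field is `c`. -/
noncomputable def stabilizeAux (p q : ℝ) (R : State L → Option (Fin L)) :
    ℕ → State L → (Fin L → Bool) → ℝ
  | 0, s, c => if s.w = 0 ∧ s.z = c then 1 else 0
  | n + 1, s, c =>
    match R s with
    | none => if s.z = c then 1 else 0
    | some x =>
      if s.z x then stabilizeAux p q R n (topple s x) c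
      else p * stabilizeAux p q R n (settle s x) c
        + q * stabilizeAux p q R n (jump s x) c

/-- The canonical evolution rule: evolve the leftmost waiting particle. -/
def minRule (s : State L) : Option (Fin L) :=
  if h : s.w = 0 then none
  else some (s.w.toFinset.min'
    (Finset.nonempty_iff_ne_empty.mpr (by simpa [Multiset.toFinset_eq_empty] using h)))

/-- A termination measure: the stabilization process started from `s` ends after at most
`fuel s` elementary steps, whatever the rule and the randomness. -/
def potential (s : State L) : ℕ :=
  (s.w.map fun x => L + 1 - x.val).sum + ∑ x : Fin L, (if s.z x then L + 1 - x.val else 0)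

def fuel (s : State L) : ℕ := 2 * potential s + Multiset.card s.w

/-- Add one waiting particle at site `1` (index `0`). -/
def addGrain (r : Fin L → Bool) : State L :=
  ⟨r, if h : 0 < L then {(⟨0, h⟩ : Fin L)} else 0⟩

/-- The driven-dissipative transition kernel `W` of the DSS: add a particle at site 1 and
stabilize. -/
noncomputable def Wker (p q : ℝ) (r r' : Fin L → Bool) : ℝ :=
  stabilizeAux p q minRule (fuel (addGrain r)) (addGrain r) r'

/-- `W` as a matrix on stable configurations. -/
noncomputable def Wmat (p q : ℝ) (L : ℕ) :
    Matrix (Fin L → Bool) (Fin L → Bool) ℝ :=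
  Matrix.of fun r r' => Wker p q r r'

/-- The product Bernoulli(p) measure `ψ(r) = p^(Σ r) q^(L - Σ r)`. -/
noncomputable def psi (p q : ℝ) {L : ℕ} (r : Fin L → Bool) : ℝ :=
  p ^ (Finset.univ.filter fun x => r x = true).card *
    q ^ (L - (Finset.univ.filter fun x => r x = true).card)

section ChainLaw

open Finset

variable (p q : ℝ)

def bern (a : Bool) : ℝ := if a then p else q

lemma sum_bern (hpq : p + q = 1) : ∑ a, bern p q a = 1 := by
  simp [bern, hpq]

lemma prod_bern_eq_psi (c : Fin L → Bool) : ∏ i, bern p q (c i) = psi p q c := by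
  have hcard := card_filter_add_card_filter_not (s := (univ : Finset (Fin L))) (fun i => c i = true)
  rw [card_univ, Fintype.card_fin] at hcard
  simp only [bern, psi, prod_ite, prod_const]
  congr 2
  omega

/-- `chainLaw p q n t z c` is the probability that `t` particles added at the first site of a
chain of `n` sites in configuration `z` stabilize to `c`: when `t ≥ 1` the first site ends in
state `c 0` with probability `bern p q (c 0)` and passes `t + z 0 - c 0` particles on. -/
noncomputable def chainLaw : (n : ℕ) → ℕ → Matrix (Fin n → Bool) (Fin n → Bool) ℝ
  | 0, _ => 1
  | _ + 1, 0 => 1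
  | n + 1, t + 1 => Matrix.of fun z c =>
      bern p q (c 0) * chainLaw n (t + 1 + (z 0).toNat - (c 0).toNat) (Fin.tail z) (Fin.tail c)

variable {p q}

@[simp] lemma chainLaw_zero (n : ℕ) : chainLaw p q n 0 = 1 := by
  cases n <;> rfl

lemma chainLaw_succ_succ (n t : ℕ) (z c : Fin (n + 1) → Bool) :
    chainLaw p q (n + 1) (t + 1) z c =
      bern p q (c 0) *
        chainLaw p q n (t + 1 + (z 0).toNat - (c 0).toNat) (Fin.tail z) (Fin.tail c) :=
  rfl

lemma sum_fun_fin_succ {α M : Type*} [Fintype α] [AddCommMonoid M] {n : ℕ}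
    (f : (Fin (n + 1) → α) → M) :
    ∑ b, f b = ∑ a : α, ∑ b : Fin n → α, f (Fin.cons a b) := by
  rw [← Fintype.sum_prod_type']
  exact (Fintype.sum_equiv (Fin.consEquiv fun _ => α) _ _ fun _ => rfl).symm

lemma chainLaw_add (hpq : p + q = 1) (n m k : ℕ) :
    chainLaw p q n (m + k) = chainLaw p q n m * chainLaw p q n k := by
  induction n generalizing m k with
  | zero => simp [chainLaw]
  | succ n ih =>
    rcases m with _ | m; · simp
    rcases k with _ | k; · simp
    ext z c
    have hcount : ∀ a : Bool, m + 1 + (z 0).toNat - a.toNat + (k + 1 + a.toNat - (c 0).toNat)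
        = m + k + 1 + 1 + (z 0).toNat - (c 0).toNat := fun a => by
      have := a.toNat_le; have := (c 0).toNat_le; omega
    calc chainLaw p q (n + 1) (m + 1 + (k + 1)) z c
        = bern p q (c 0) * ∑ a, bern p q a * chainLaw p q n
            (m + k + 1 + 1 + (z 0).toNat - (c 0).toNat) (Fin.tail z) (Fin.tail c) := by
          rw [← sum_mul, sum_bern p q hpq, one_mul, ← chainLaw_succ_succ,
            show m + 1 + (k + 1) = m + k + 1 + 1 by ring]
      _ = bern p q (c 0) * ∑ a, bern p q a * (chainLaw p q n (m + 1 + (z 0).toNat - a.toNat) *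
            chainLaw p q n (k + 1 + a.toNat - (c 0).toNat)) (Fin.tail z) (Fin.tail c) := by
          simp_rw [← ih, hcount]
      _ = (chainLaw p q (n + 1) (m + 1) * chainLaw p q (n + 1) (k + 1)) z c := by
          simp only [Matrix.mul_apply, sum_fun_fin_succ, chainLaw_succ_succ, Fin.cons_zero,
            Fin.tail_cons, mul_sum]
          refine sum_congr rfl fun a _ => sum_congr rfl fun b _ => ?_
          ring

lemma chainLaw_one_pow (hpq : p + q = 1) (n k : ℕ) : chainLaw p q n 1 ^ k = chainLaw p q n k := by
  induction k with
  | zero => simp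
  | succ k ih => rw [pow_succ, ih, chainLaw_add hpq]

/-- Under this bound at least one particle reaches every site, so every site is resampled:
at least `t + #{k < i | z k} - i` particles reach site `i`, and
`#{k < i | z k} ≥ #{k | z k} - (n - i)`. -/
lemma chainLaw_eq_prod_bern {n t : ℕ} (z c : Fin n → Bool)
    (ht : min n (n + 1 - #{i | z i = true}) ≤ t) :
    chainLaw p q n t z c = ∏ i, bern p q (c i) := by
  induction n generalizing t with
  | zero => simp [chainLaw, Matrix.one_apply, Subsingleton.elim z c]
  | succ n ih =>
    have hones : #{i | z i = true} = (z 0).toNat + #{i | Fin.tail z i = true} := by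
      rw [Fin.card_filter_univ_succ']; cases z 0 <;> rfl
    have htail := (card_filter_le univ fun i : Fin n => Fin.tail z i = true).trans_eq (card_fin n)
    have hz := (z 0).toNat_le
    have hc := (c 0).toNat_le
    obtain ⟨t, rfl⟩ : ∃ t', t = t' + 1 := ⟨t - 1, by omega⟩
    have hnext : min n (n + 1 - #{i | Fin.tail z i = true})
        ≤ t + 1 + (z 0).toNat - (c 0).toNat := by
      omega
    rw [chainLaw_succ_succ, Fin.prod_univ_succ, ih (Fin.tail z) (Fin.tail c) hnext]
    rfl

end ChainLaw

section Stabilization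

open Finset Function

lemma sum_stable_weight_update (z : Fin L → Bool) (x : Fin L) (b : Bool) :
    (∑ y, if update z x b y then L + 1 - y.val else 0) + (if z x then L + 1 - x.val else 0)
      = (∑ y, if z y then L + 1 - y.val else 0) + (if b then L + 1 - x.val else 0) := by
  rw [← add_sum_erase _ _ (mem_univ x), ← add_sum_erase _ _ (mem_univ x), update_self,
    sum_congr rfl fun y hy => by rw [update_of_ne (ne_of_mem_erase hy)]]
  omega

lemma succSite_weight_le (x : Fin L) :
    ((succSite L x).map fun y => L + 1 - y.val).sum ≤ L - x.val := by
  unfold succSite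
  split <;> simp

lemma card_succSite_le (x : Fin L) : Multiset.card (succSite L x) ≤ 1 := by
  unfold succSite
  split <;> simp

lemma fuel_topple_lt (s : State L) (x : Fin L) (hz : s.z x = true) :
    fuel (topple s x) < fuel s := by
  have hz' := sum_stable_weight_update s.z x false
  have := succSite_weight_le x
  have := card_succSite_le x
  simp only [hz, ↓reduceIte, Bool.false_eq_true, add_zero] at hz'
  unfold fuel potential
  rw [show (topple s x).z = update s.z x false from rfl,
    show (topple s x).w = s.w + succSite L x from rfl, Multiset.map_add, Multiset.sum_add,
    Multiset.card_add]
  omega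

lemma fuel_settle_lt (s : State L) (x : Fin L) (hx : x ∈ s.w) (hz : s.z x = false) :
    fuel (settle s x) < fuel s := by
  have hz' := sum_stable_weight_update s.z x true
  have := Multiset.sum_map_erase hx (f := fun y : Fin L => L + 1 - y.val)
  have := Multiset.card_erase_add_one hx
  simp only [hz, ↓reduceIte, Bool.false_eq_true, add_zero] at hz'
  unfold fuel potential
  rw [show (settle s x).z = update s.z x true from rfl, show (settle s x).w = s.w.erase x from rfl]
  omega

lemma fuel_jump_lt (s : State L) (x : Fin L) (hx : x ∈ s.w) : fuel (jump s x) < fuel s := by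
  have := Multiset.sum_map_erase hx (f := fun y : Fin L => L + 1 - y.val)
  have := Multiset.card_erase_add_one hx
  have := succSite_weight_le x
  have := card_succSite_le x
  have := x.isLt
  unfold fuel potential
  rw [show (jump s x).z = s.z from rfl, show (jump s x).w = s.w.erase x + succSite L x from rfl,
    Multiset.map_add, Multiset.sum_add, Multiset.card_add]
  omega

lemma minRule_eq_none_iff (s : State L) : minRule s = none ↔ s.w = 0 := by
  unfold minRule
  split <;> simp_all

lemma mem_of_minRule_eq_some {s : State L} {x : Fin L} (h : minRule s = some x) : x ∈ s.w := by
  unfold minRule at h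
  split at h
  · simp at h
  · rw [Option.some_inj] at h
    exact h ▸ Multiset.mem_toFinset.mp (min'_mem _ _)

lemma minRule_eq_some {s : State L} {x : Fin L} (hx : x ∈ s.w) (hmin : ∀ y ∈ s.w, x ≤ y) :
    minRule s = some x := by
  unfold minRule
  rw [dif_neg fun h => by simp [h] at hx, Option.some_inj]
  exact le_antisymm (min'_le _ _ (Multiset.mem_toFinset.mpr hx))
    (le_min' _ _ _ fun y hy => hmin y (Multiset.mem_toFinset.mp hy))

variable (p q : ℝ)

lemma stabilizeAux_of_w_eq_zero (n : ℕ) {s : State L} (hw : s.w = 0) (c : Fin L → Bool) :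
    stabilizeAux p q minRule n s c = if s.z = c then 1 else 0 := by
  cases n <;> simp [stabilizeAux, hw, (minRule_eq_none_iff s).mpr hw]

lemma stabilizeAux_congr_fuel {n n' : ℕ} {s : State L} (hn : fuel s ≤ n) (hn' : fuel s ≤ n')
    (c : Fin L → Bool) : stabilizeAux p q minRule n s c = stabilizeAux p q minRule n' s c := by
  induction n generalizing n' s with
  | zero =>
    have hw : s.w = 0 := Multiset.card_eq_zero.mp (by unfold fuel at hn; omega)
    rw [stabilizeAux_of_w_eq_zero p q _ hw, stabilizeAux_of_w_eq_zero p q _ hw]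
  | succ n ih =>
    cases hR : minRule s with
    | none =>
      have hw := (minRule_eq_none_iff s).mp hR
      rw [stabilizeAux_of_w_eq_zero p q _ hw, stabilizeAux_of_w_eq_zero p q _ hw]
    | some x =>
      have hx := mem_of_minRule_eq_some hR
      have := Multiset.card_pos_iff_exists_mem.mpr ⟨x, hx⟩
      obtain ⟨n', rfl⟩ : ∃ k, n' = k + 1 := ⟨n' - 1, by unfold fuel at hn'; omega⟩
      simp only [stabilizeAux, hR]
      split_ifs with hz
      · have := fuel_topple_lt s x hz
        exact ih (by omega) (by omega)
      · have := fuel_settle_lt s x hx (by simpa using hz)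
        have := fuel_jump_lt s x hx
        rw [ih (n' := n') (by omega) (by omega), ih (n' := n') (by omega) (by omega)]

noncomputable def stabilize (s : State L) (c : Fin L → Bool) : ℝ :=
  stabilizeAux p q minRule (fuel s) s c

lemma stabilize_of_w_eq_zero {s : State L} (hw : s.w = 0) (c : Fin L → Bool) :
    stabilize p q s c = if s.z = c then 1 else 0 :=
  stabilizeAux_of_w_eq_zero p q _ hw c

lemma stabilize_of_minRule_eq_some {s : State L} {x : Fin L} (h : minRule s = some x)
    (c : Fin L → Bool) :
    stabilize p q s c = if s.z x then stabilize p q (topple s x) c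
      else p * stabilize p q (settle s x) c + q * stabilize p q (jump s x) c := by
  have hx := mem_of_minRule_eq_some h
  have := Multiset.card_pos_iff_exists_mem.mpr ⟨x, hx⟩
  obtain ⟨n, hn⟩ : ∃ n, fuel s = n + 1 := ⟨fuel s - 1, by unfold fuel; omega⟩
  unfold stabilize
  rw [hn]
  simp only [stabilizeAux, h]
  split_ifs with hz
  · exact stabilizeAux_congr_fuel p q (by have := fuel_topple_lt s x hz; omega) le_rfl c
  · rw [stabilizeAux_congr_fuel p q (n' := fuel (settle s x))
        (by have := fuel_settle_lt s x hx (by simpa using hz); omega) le_rfl,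
      stabilizeAux_congr_fuel p q (n' := fuel (jump s x))
        (by have := fuel_jump_lt s x hx; omega) le_rfl]

end Stabilization

section Pile

open Function

variable (p q : ℝ)

lemma minRule_pile (z : Fin L → Bool) (x : Fin L) (m m' : ℕ) :
    minRule (⟨z, (m + 1) • {x} + m' • succSite L x⟩ : State L) = some x := by
  refine minRule_eq_some (by simp) fun y hy => ?_
  rcases Multiset.mem_add.mp hy with hy | hy
  · rw [(by simpa using hy : y = x)]
  · have hy := Multiset.mem_of_mem_nsmul hy
    unfold succSite at hy
    split at hy
    · rw [Multiset.mem_singleton.mp hy, Fin.le_def]; simp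
    · simp at hy

lemma stabilize_pile_step (z : Fin L → Bool) (x : Fin L) (m m' : ℕ) (c : Fin L → Bool) :
    stabilize p q ⟨z, (m + 1) • {x} + m' • succSite L x⟩ c =
      if z x then
        stabilize p q ⟨update z x false, (m + 1) • {x} + (m' + 1) • succSite L x⟩ c
      else p * stabilize p q ⟨update z x true, m • {x} + m' • succSite L x⟩ c
        + q * stabilize p q ⟨z, m • {x} + (m' + 1) • succSite L x⟩ c := by
  have hcons : (m + 1) • ({x} : Multiset (Fin L)) + m' • succSite L x
      = x ::ₘ (m • {x} + m' • succSite L x) := by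
    rw [succ_nsmul', ← Multiset.singleton_add, add_assoc]
  rw [stabilize_of_minRule_eq_some p q (minRule_pile z x m m')]
  simp only [topple, settle, jump, add_assoc, ← succ_nsmul]
  rw [hcons, Multiset.erase_cons_head, add_assoc, ← succ_nsmul]

variable {p q}

lemma stabilize_pile_of_false (hpq : p + q = 1) {z : Fin L → Bool} {x : Fin L} (hz : z x = false)
    (m m' : ℕ) (c : Fin L → Bool) :
    stabilize p q ⟨z, (m + 1) • {x} + m' • succSite L x⟩ c =
      p * stabilize p q ⟨update z x true, (m' + m) • succSite L x⟩ c
        + q * stabilize p q ⟨z, (m' + m + 1) • succSite L x⟩ c := by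
  induction m generalizing m' with
  | zero =>
    rw [stabilize_pile_step, if_neg (by simp [hz])]
    simp
  | succ m ih =>
    -- settling a particle on the empty site and toppling it again is the same as a jump
    rw [stabilize_pile_step, if_neg (by simp [hz]), stabilize_pile_step, if_pos (update_self ..),
      update_idem, ← hz, update_eq_self, ← add_mul, hpq, one_mul, ih,
      show m' + 1 + m = m' + (m + 1) by ring]

lemma stabilize_pile (hpq : p + q = 1) (z : Fin L → Bool) (x : Fin L) (m : ℕ)
    (c : Fin L → Bool) :
    stabilize p q ⟨z, (m + 1) • {x}⟩ c = ∑ a, bern p q a *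
      stabilize p q ⟨update z x a, (m + 1 + (z x).toNat - a.toNat) • succSite L x⟩ c := by
  have h := stabilize_pile_step p q z x m 0 c
  rw [zero_nsmul, add_zero] at h
  cases hz : z x
  · rw [← add_zero ((m + 1) • _), ← zero_nsmul (succSite L x),
      stabilize_pile_of_false hpq hz]
    have hupd : update z x false = z := by rw [← hz]; exact update_eq_self x z
    simp [bern, hupd]
  · rw [h, if_pos hz, stabilize_pile_of_false hpq (update_self ..), update_idem]
    simp [bern, add_comm]

end Pile

section PileAtSite

open Function

def suffix {j n : ℕ} (h : j + n = L) (z : Fin L → Bool) : Fin n → Bool :=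
  fun i => z ⟨j + i, by omega⟩

lemma suffix_zero (h : 0 + L = L) (z : Fin L → Bool) : suffix h z = z := by
  funext i
  exact congrArg z (Fin.ext (zero_add i.val))

lemma suffix_succ {j n : ℕ} (h : j + (n + 1) = L) (h' : j + 1 + n = L) (z : Fin L → Bool) :
    suffix h' z = Fin.tail (suffix h z) := by
  funext i
  simp only [suffix, Fin.tail, Fin.val_succ]
  congr 2
  omega

lemma suffix_update_of_lt {j n : ℕ} (h : j + n = L) {x : Fin L} (hx : x.val < j) (a : Bool)
    (z : Fin L → Bool) : suffix h (update z x a) = suffix h z := by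
  funext i
  refine update_of_ne (fun e => ?_) a z
  rw [← e] at hx
  simp at hx

lemma eq_iff_forall_lt_and_suffix_eq {j n : ℕ} (h : j + n = L) {z c : Fin L → Bool} :
    z = c ↔ (∀ i : Fin L, i.val < j → z i = c i) ∧ suffix h z = suffix h c := by
  refine ⟨by rintro rfl; simp, fun ⟨hlt, hsuffix⟩ => funext fun i => ?_⟩
  by_cases hi : i.val < j
  · exact hlt i hi
  · simpa [suffix, show j + (i.val - j) = i.val by omega] using
      congrFun hsuffix ⟨i.val - j, by omega⟩

lemma forall_lt_succ_update_iff {j : ℕ} (hj : j < L) (z c : Fin L → Bool) (a : Bool) :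
    (∀ i : Fin L, i.val < j + 1 → update z ⟨j, hj⟩ a i = c i) ↔
      (∀ i : Fin L, i.val < j → z i = c i) ∧ a = c ⟨j, hj⟩ := by
  refine ⟨fun h => ⟨fun i hi => ?_, by simpa using h ⟨j, hj⟩ (by simp)⟩, ?_⟩
  · simpa [update_of_ne (show i ≠ ⟨j, hj⟩ by rintro rfl; simp at hi)] using h i (by omega)
  · rintro ⟨h, rfl⟩ i hi
    by_cases e : i = ⟨j, hj⟩
    · simp [e]
    · rw [update_of_ne e]
      exact h i (by have : i.val ≠ j := fun h => e (Fin.ext h); omega)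

def atSite (L j : ℕ) : Multiset (Fin L) :=
  if h : j < L then {(⟨j, h⟩ : Fin L)} else 0

variable {p q : ℝ}

lemma stabilize_of_no_waiting {j n : ℕ} (h : j + n = L) (z c : Fin L → Bool) :
    stabilize p q ⟨z, 0⟩ c = (if ∀ i : Fin L, i.val < j → z i = c i then 1 else 0) *
      (1 : Matrix (Fin n → Bool) (Fin n → Bool) ℝ) (suffix h z) (suffix h c) := by
  rw [stabilize_of_w_eq_zero p q rfl, Matrix.one_apply, ite_zero_mul_ite_zero, mul_one]
  exact if_congr (eq_iff_forall_lt_and_suffix_eq h) rfl rfl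

lemma stabilize_atSite (hpq : p + q = 1) {j n : ℕ} (h : j + n = L) (z c : Fin L → Bool)
    (m : ℕ) :
    stabilize p q ⟨z, m • atSite L j⟩ c =
      (if ∀ i : Fin L, i.val < j → z i = c i then 1 else 0) *
        chainLaw p q n m (suffix h z) (suffix h c) := by
  induction n generalizing j z m with
  | zero =>
    rw [atSite, dif_neg (by omega), nsmul_zero, stabilize_of_no_waiting h]
    rfl
  | succ n ih =>
    rcases m with _ | m
    · rw [zero_nsmul, stabilize_of_no_waiting h, chainLaw_zero]
    have hj : j < L := by omega
    have h' : j + 1 + n = L := by omega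
    rw [atSite, dif_pos hj, stabilize_pile hpq]
    simp_rw [show succSite L ⟨j, hj⟩ = atSite L (j + 1) from rfl, ih h',
      suffix_update_of_lt h' (show (⟨j, hj⟩ : Fin L).val < j + 1 by simp), suffix_succ h h',
      forall_lt_succ_update_iff hj]
    rw [Fintype.sum_eq_single (c ⟨j, hj⟩) fun a ha => by simp [ha], chainLaw_succ_succ]
    simp only [and_true]
    rw [show suffix h z 0 = z ⟨j, hj⟩ from rfl, show suffix h c 0 = c ⟨j, hj⟩ from rfl]
    ring

end PileAtSite

lemma Wmat_eq_chainLaw_one {p q : ℝ} (hpq : p + q = 1) : Wmat p q L = chainLaw p q L 1 := by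
  ext r c
  have h := stabilize_atSite hpq (zero_add L) r c 1
  rw [one_nsmul, suffix_zero, suffix_zero] at h
  exact h.trans (by simp)

theorem reset_to_stationary_general
    (L : ℕ) (p q : ℝ) (hpq : p + q = 1)
    (r : Fin L → Bool) :
    ∀ c : Fin L → Bool,
      ((Wmat p q L) ^
          (min L (L + 1 - (Finset.univ.filter fun x => r x = true).card))) r c
        = psi p q c := by
  intro c
  rw [Wmat_eq_chainLaw_one hpq, chainLaw_one_pow hpq, chainLaw_eq_prod_bern r c le_rfl,
    prod_bern_eq_psi]

/-- from any stable configuration `r`, after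
`τ = min(L, L+1-Σ_x r(x))` driven-dissipative steps the law of the configuration is
exactly the stationary product Bernoulli(p) measure `ψ`: `W^τ δ_r = ψ`. -/
theorem reset_to_stationary
    (L : ℕ) (hL : 0 < L) (p q : ℝ) (hp : 0 < p) (hq : 0 < q) (hpq : p + q = 1)
    (r : Fin L → Bool) :
    ∀ c : Fin L → Bool,
      ((Wmat p q L) ^
          (min L (L + 1 - (Finset.univ.filter fun x => r x = true).card))) r c
        = psi p q c :=
  reset_to_stationary_general L p q hpq r

end DSS
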